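/- arXiv:1512.01813 — 3 statements merged into one kernel-verified Lean document; each statement's English description precedes it below -/
import Mathlib

section
/- (POD basis theorem.) Let V be a real Hilbert space, let y_0, …, y_n ∈ V be given snapshots and β_0, …, β_n > 0 given positive weights, let 𝒱 := span{y_0, …, y_n} with d := dim 𝒱, and let R : V → V be defined by Rψ = Σ_{j=0}^n β_j ⟨y_j, ψ⟩ y_j, with positive eigenvalues λ_1 ≥ … ≥ λ_d > 0 counted with multiplicity and corresponding orthonormal eigenvectors ψ_1, …, ψ_d spanning 𝒱. Then for every ℓ ∈ {1, …, d}, the family ψ_1, …, ψ_ℓ solves the POD minimization problem: for every orthonormal family φ_1, …, φ_ℓ in V one has Σ_{j=0}^n β_j ‖y_j − Σ_{i=1}^ℓ ⟨y_j, ψ_i⟩ ψ_i‖² ≤ Σ_{j=0}^n β_j ‖y_j − Σ_{i=1}^ℓ ⟨y_j, φ_i⟩ φ_i‖². -/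
/-!
Orthogonal projection onto an orthonormal family `φ` leaves the weighted error
`∑ⱼ βⱼ ‖yⱼ‖² - ∑ᵢ ⟪R φᵢ, φᵢ⟫`, so one has to maximise the captured energy `∑ᵢ ⟪R φᵢ, φᵢ⟫`.
Since the snapshots lie in the span of the eigenvectors, `⟪R w, w⟫ = ∑ₖ λₖ ⟪ψₖ, w⟫²`, hence the
energy of `φ` is `∑ₖ λₖ tₖ` with weights `tₖ = ∑ᵢ ⟪ψₖ, φᵢ⟫² ∈ [0, 1]` of total mass at most `ℓ`
(Bessel's inequality, both ways). For decreasing nonnegative `λ` such a combination is at most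
`λ₁ + ⋯ + λ_ℓ`, the energy of `ψ₁, …, ψ_ℓ`.
-/

open RealInnerProductSpace Finset Submodule

section Orthonormal

variable {V ι : Type*} [NormedAddCommGroup V] [InnerProductSpace ℝ V] [Fintype ι] {v : ι → V}

theorem Orthonormal.norm_sub_sum_inner_smul_sq (hv : Orthonormal ℝ v) (u : V) :
    ‖u - ∑ i, ⟪u, v i⟫ • v i‖ ^ 2 = ‖u‖ ^ 2 - ∑ i, ⟪u, v i⟫ ^ 2 := by
  have hproj : ⟪u, ∑ i, ⟪u, v i⟫ • v i⟫ = ∑ i, ⟪u, v i⟫ ^ 2 := by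
    simp only [inner_sum, real_inner_smul_right, sq]
  have hnorm : ‖∑ i, ⟪u, v i⟫ • v i‖ ^ 2 = ∑ i, ⟪u, v i⟫ ^ 2 := by
    rw [← real_inner_self_eq_norm_sq, hv.inner_sum]
    simp only [conj_trivial, sq]
  rw [norm_sub_sq_real, hproj, hnorm]
  ring

theorem Orthonormal.sum_inner_sq_le (hv : Orthonormal ℝ v) (x : V) :
    ∑ i, ⟪x, v i⟫ ^ 2 ≤ ‖x‖ ^ 2 := by
  simpa only [Real.norm_eq_abs, sq_abs, real_inner_comm x] using
    hv.sum_inner_products_le x (s := univ)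

theorem Orthonormal.sum_sum_inner_sq_le {κ : Type*} [Fintype κ] {φ : κ → V}
    (hv : Orthonormal ℝ v) (hφ : Orthonormal ℝ φ) :
    ∑ i, ∑ k, ⟪v i, φ k⟫ ^ 2 ≤ Fintype.card κ := by
  simp_rw [real_inner_comm (φ _)]
  rw [sum_comm]
  calc ∑ k, ∑ i, ⟪φ k, v i⟫ ^ 2 ≤ ∑ k, ‖φ k‖ ^ 2 := sum_le_sum fun k _ => hv.sum_inner_sq_le _
    _ = Fintype.card κ := by simp [hφ.1]

theorem Orthonormal.inner_eq_sum_inner_mul_inner (hv : Orthonormal ℝ v) {x : V}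
    (hx : x ∈ span ℝ (Set.range v)) (w : V) :
    ⟪x, w⟫ = ∑ i, ⟪v i, x⟫ * ⟪v i, w⟫ := by
  obtain ⟨c, rfl⟩ := (mem_span_range_iff_exists_fun ℝ).1 hx
  simp only [hv.inner_right_fintype, sum_inner, real_inner_smul_left]

end Orthonormal

section Correlation

variable {V J ι : Type*} [NormedAddCommGroup V] [InnerProductSpace ℝ V] [Fintype J] [Fintype ι]

def correlationOp (y : J → V) (β : J → ℝ) (v : V) : V :=
  ∑ j, (β j * ⟪y j, v⟫) • y j

theorem inner_correlationOp (y : J → V) (β : J → ℝ) (v w : V) :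
    ⟪correlationOp y β v, w⟫ = ∑ j, β j * ⟪y j, v⟫ * ⟪y j, w⟫ := by
  simp only [correlationOp, sum_inner, real_inner_smul_left]

theorem sum_mul_norm_sub_sum_inner_smul_sq (y : J → V) (β : J → ℝ) {φ : ι → V}
    (hφ : Orthonormal ℝ φ) :
    ∑ j, β j * ‖y j - ∑ i, ⟪y j, φ i⟫ • φ i‖ ^ 2 =
      ∑ j, β j * ‖y j‖ ^ 2 - ∑ i, ⟪correlationOp y β (φ i), φ i⟫ := by
  simp only [hφ.norm_sub_sum_inner_smul_sq, inner_correlationOp, mul_sub, mul_sum, sum_sub_distrib,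
    mul_assoc, ← sq]
  rw [sum_comm]

theorem inner_correlationOp_self_eq_sum_mul_inner_sq {y : J → V} {β : J → ℝ} {ψ : ι → V}
    {lam : ι → ℝ} (hψ : Orthonormal ℝ ψ) (hy : ∀ j, y j ∈ span ℝ (Set.range ψ))
    (heig : ∀ k, correlationOp y β (ψ k) = lam k • ψ k) (w : V) :
    ⟪correlationOp y β w, w⟫ = ∑ k, lam k * ⟪ψ k, w⟫ ^ 2 :=
  calc ⟪correlationOp y β w, w⟫
      = ∑ j, β j * ⟪y j, w⟫ * ∑ k, ⟪ψ k, y j⟫ * ⟪ψ k, w⟫ := by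
        simp only [inner_correlationOp, ← hψ.inner_eq_sum_inner_mul_inner (hy _)]
    _ = ∑ k, ⟪ψ k, w⟫ * ⟪correlationOp y β (ψ k), w⟫ := by
        simp only [inner_correlationOp, mul_sum]
        rw [sum_comm]
        refine sum_congr rfl fun k _ => sum_congr rfl fun j _ => ?_
        rw [real_inner_comm (y j)]
        ring
    _ = ∑ k, lam k * ⟪ψ k, w⟫ ^ 2 := by
        simp only [heig, real_inner_smul_left]
        exact sum_congr rfl fun k _ => by ring

end Correlation

theorem sum_castLE_eq_sum_ite {M : Type*} [AddCommMonoid M] {ℓ d : ℕ} (h : ℓ ≤ d) (f : Fin d → M) :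
    ∑ i : Fin ℓ, f (Fin.castLE h i) = ∑ k : Fin d, if (k : ℕ) < ℓ then f k else 0 := by
  rw [← sum_filter]
  refine sum_of_injOn (Fin.castLE h) (Fin.castLE_injective h).injOn (fun i _ => by simp)
    (fun k hk hk' => absurd ⟨⟨k, by simpa using hk⟩, by simp, rfl⟩ hk') fun i _ => rfl

theorem sum_mul_le_sum_castLE_of_antitone {ℓ d : ℕ} (hℓ : 1 ≤ ℓ) (hℓd : ℓ ≤ d)
    {lam t : Fin d → ℝ} (hlam : Antitone lam) (hlam0 : ∀ k, 0 ≤ lam k)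
    (ht0 : ∀ k, 0 ≤ t k) (ht1 : ∀ k, t k ≤ 1) (hsum : ∑ k, t k ≤ ℓ) :
    ∑ k, lam k * t k ≤ ∑ i : Fin ℓ, lam (Fin.castLE hℓd i) := by
  set c := lam ⟨ℓ - 1, by omega⟩
  have hpoint : ∀ k, lam k * t k ≤ (if (k : ℕ) < ℓ then lam k - c else 0) + c * t k := by
    intro k
    split_ifs with hk
    · have : c ≤ lam k := hlam (Fin.mk_le_mk.2 (by omega))
      nlinarith [ht1 k]
    · have : lam k ≤ c := hlam (Fin.mk_le_mk.2 (by omega))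
      nlinarith [ht0 k]
  calc ∑ k, lam k * t k
      ≤ ∑ k : Fin d, ((if (k : ℕ) < ℓ then lam k - c else 0) + c * t k) :=
        sum_le_sum fun k _ => hpoint k
    _ = ∑ i : Fin ℓ, (lam (Fin.castLE hℓd i) - c) + c * ∑ k, t k := by
        rw [sum_add_distrib, mul_sum, sum_castLE_eq_sum_ite hℓd fun k => lam k - c]
    _ ≤ ∑ i : Fin ℓ, (lam (Fin.castLE hℓd i) - c) + c * ℓ := by
        gcongr
        exact hlam0 _
    _ = ∑ i : Fin ℓ, lam (Fin.castLE hℓd i) := by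
        simp only [sum_sub_distrib, sum_const, card_univ, Fintype.card_fin, nsmul_eq_mul]
        ring

theorem pod_basis_theorem_general
    {V : Type*} [NormedAddCommGroup V] [InnerProductSpace ℝ V]
    (n : ℕ) (y : Fin (n + 1) → V) (β : Fin (n + 1) → ℝ)
    (R : V → V) (hR : ∀ ψ : V, R ψ = ∑ j, (β j * ⟪y j, ψ⟫) • y j)
    (d : ℕ)
    (lam : Fin d → ℝ) (ψ : Fin d → V)
    (hord : ∀ i j : Fin d, i ≤ j → lam j ≤ lam i)
    (hpos : ∀ i : Fin d, 0 < lam i)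
    (hon : Orthonormal ℝ ψ)
    (heig : ∀ i : Fin d, R (ψ i) = lam i • ψ i)
    (hspan : Submodule.span ℝ (Set.range ψ) = Submodule.span ℝ (Set.range y))
    (ℓ : ℕ) (hℓ1 : 1 ≤ ℓ) (hℓd : ℓ ≤ d) :
    ∀ φ : Fin ℓ → V, Orthonormal ℝ φ →
      ∑ j, β j * ‖y j - ∑ i : Fin ℓ, ⟪y j, ψ (Fin.castLE hℓd i)⟫ • ψ (Fin.castLE hℓd i)‖ ^ 2 ≤
      ∑ j, β j * ‖y j - ∑ i : Fin ℓ, ⟪y j, φ i⟫ • φ i‖ ^ 2 := by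
  intro φ hφ
  obtain rfl : R = correlationOp y β := funext hR
  have hy : ∀ j, y j ∈ span ℝ (Set.range ψ) := fun j => hspan ▸ subset_span ⟨j, rfl⟩
  have henergy := inner_correlationOp_self_eq_sum_mul_inner_sq hon hy heig
  have heigval : ∀ k, ⟪correlationOp y β (ψ k), ψ k⟫ = lam k := fun k => by
    rw [heig, real_inner_smul_left, real_inner_self_eq_norm_sq, hon.1 k, one_pow, mul_one]
  rw [sum_mul_norm_sub_sum_inner_smul_sq y β hφ,
    sum_mul_norm_sub_sum_inner_smul_sq y β (φ := fun i => ψ (Fin.castLE hℓd i))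
      (hon.comp _ (Fin.castLE_injective hℓd)),
    sub_le_sub_iff_left]
  calc ∑ i, ⟪correlationOp y β (φ i), φ i⟫
      = ∑ k, lam k * ∑ i, ⟪ψ k, φ i⟫ ^ 2 := by
        simp only [henergy, mul_sum]
        exact sum_comm
    _ ≤ ∑ i : Fin ℓ, lam (Fin.castLE hℓd i) :=
        sum_mul_le_sum_castLE_of_antitone hℓ1 hℓd (fun i j => hord i j) (fun k => (hpos k).le)
          (fun k => sum_nonneg fun i _ => sq_nonneg _)
          (fun k => (hφ.sum_inner_sq_le (ψ k)).trans_eq (by rw [hon.1 k, one_pow]))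
          (by simpa using hon.sum_sum_inner_sq_le hφ)
    _ = ∑ i : Fin ℓ, ⟪correlationOp y β (ψ (Fin.castLE hℓd i)), ψ (Fin.castLE hℓd i)⟫ := by
        simp only [heigval]

/-- POD basis theorem: the leading eigenvectors `ψ_1, …, ψ_ℓ` of the correlation
operator solve the POD minimization problem among all orthonormal families of
size `ℓ`. -/
theorem pod_basis_theorem
    {V : Type*} [NormedAddCommGroup V] [InnerProductSpace ℝ V] [CompleteSpace V]
    (n : ℕ) (y : Fin (n + 1) → V) (β : Fin (n + 1) → ℝ) (hβ : ∀ j, 0 < β j)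
    (R : V → V) (hR : ∀ ψ : V, R ψ = ∑ j, (β j * ⟪y j, ψ⟫) • y j)
    (d : ℕ) (hd : d = Module.finrank ℝ (Submodule.span ℝ (Set.range y)))
    (lam : Fin d → ℝ) (ψ : Fin d → V)
    (hord : ∀ i j : Fin d, i ≤ j → lam j ≤ lam i)
    (hpos : ∀ i : Fin d, 0 < lam i)
    (hon : Orthonormal ℝ ψ)
    (heig : ∀ i : Fin d, R (ψ i) = lam i • ψ i)
    (hspan : Submodule.span ℝ (Set.range ψ) = Submodule.span ℝ (Set.range y))
    (ℓ : ℕ) (hℓ1 : 1 ≤ ℓ) (hℓd : ℓ ≤ d) :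
    ∀ φ : Fin ℓ → V, Orthonormal ℝ φ →
      ∑ j, β j * ‖y j - ∑ i : Fin ℓ, ⟪y j, ψ (Fin.castLE hℓd i)⟫ • ψ (Fin.castLE hℓd i)‖ ^ 2 ≤
      ∑ j, β j * ‖y j - ∑ i : Fin ℓ, ⟪y j, φ i⟫ • φ i‖ ^ 2 :=
  pod_basis_theorem_general n y β R hR d lam ψ hord hpos hon heig hspan ℓ hℓ1 hℓd
end

section
/- (POD approximation error formula.) Let V be a real Hilbert space, let y_0, …, y_n ∈ V be given snapshots and β_0, …, β_n > 0 given positive weights, let 𝒱 := span{y_0, …, y_n} with d := dim 𝒱, and let R : V → V be defined by Rψ = Σ_{j=0}^n β_j ⟨y_j, ψ⟩ y_j, with positive eigenvalues λ_1 ≥ … ≥ λ_d > 0 counted with multiplicity and corresponding orthonormal eigenvectors ψ_1, …, ψ_d spanning 𝒱. Then for every ℓ ∈ {1, …, d} the POD approximation error is given exactly by the sum of the neglected eigenvalues: Σ_{j=0}^n β_j ‖y_j − Σ_{i=1}^ℓ ⟨y_j, ψ_i⟩ ψ_i‖² = Σ_{i=ℓ+1}^d λ_i. -/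
/-!
Expand each snapshot in the orthonormal eigenvectors, `y_j = ∑_i ⟪y_j, ψ_i⟫ ψ_i`, which is
possible because they span the snapshot space. The POD residual of `y_j` is then the tail
`∑_{i ≥ ℓ} ⟪y_j, ψ_i⟫ ψ_i`, with squared norm `∑_{i ≥ ℓ} ⟪y_j, ψ_i⟫²` by Pythagoras. Weighting by
`β_j` and exchanging the sums leaves `∑_{i ≥ ℓ} ∑_j β_j ⟪y_j, ψ_i⟫² = ∑_{i ≥ ℓ} ⟪ψ_i, R ψ_i⟫`,
and `⟪ψ_i, R ψ_i⟫ = λ_i` for a unit eigenvector.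
-/

open RealInnerProductSpace Finset

section Orthonormal

variable {V : Type*} [NormedAddCommGroup V] [InnerProductSpace ℝ V] {ι : Type*} {ψ : ι → V}

theorem Orthonormal.norm_sum_smul_sq (hψ : Orthonormal ℝ ψ) (s : Finset ι) (c : ι → ℝ) :
    ‖∑ i ∈ s, c i • ψ i‖ ^ 2 = ∑ i ∈ s, c i ^ 2 := by
  rw [← real_inner_self_eq_norm_sq, hψ.inner_sum]
  simp [sq]

theorem Orthonormal.sum_inner_smul_eq_of_mem_span [Fintype ι] (hψ : Orthonormal ℝ ψ) {x : V}
    (hx : x ∈ Submodule.span ℝ (Set.range ψ)) : ∑ i, ⟪x, ψ i⟫ • ψ i = x := by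
  obtain ⟨c, rfl⟩ := (Submodule.mem_span_range_iff_exists_fun ℝ).mp hx
  simp_rw [hψ.inner_left_fintype]
  rfl

theorem Orthonormal.norm_sub_sum_inner_smul_sq_s9 [Fintype ι] [DecidableEq ι]
    (hψ : Orthonormal ℝ ψ) {x : V} (hx : x ∈ Submodule.span ℝ (Set.range ψ)) (s : Finset ι) :
    ‖x - ∑ i ∈ s, ⟪x, ψ i⟫ • ψ i‖ ^ 2 = ∑ i ∈ sᶜ, ⟪x, ψ i⟫ ^ 2 := by
  have htail : x - ∑ i ∈ s, ⟪x, ψ i⟫ • ψ i = ∑ i ∈ sᶜ, ⟪x, ψ i⟫ • ψ i := by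
    nth_rw 1 [← hψ.sum_inner_smul_eq_of_mem_span hx, ← sum_compl_add_sum s]
    exact add_sub_cancel_right _ _
  rw [htail, hψ.norm_sum_smul_sq]

end Orthonormal

theorem eigenvalue_eq_sum_mul_inner_sq_of_norm_eq_one {V : Type*} [NormedAddCommGroup V]
    [InnerProductSpace ℝ V] {κ : Type*} [Fintype κ] (y : κ → V) (β : κ → ℝ) {R : V → V}
    (hR : ∀ ψ : V, R ψ = ∑ j, (β j * ⟪y j, ψ⟫) • y j) {ψ : V} (hψ : ‖ψ‖ = 1) {lam : ℝ}
    (heig : R ψ = lam • ψ) : lam = ∑ j, β j * ⟪y j, ψ⟫ ^ 2 :=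
  calc lam = ⟪ψ, R ψ⟫ := by
        rw [heig, real_inner_smul_right, real_inner_self_eq_norm_sq, hψ, one_pow, mul_one]
    _ = ∑ j, β j * ⟪y j, ψ⟫ ^ 2 := by
        simp_rw [hR, inner_sum, real_inner_smul_right, real_inner_comm ψ, sq, mul_assoc]

theorem Fin.compl_map_castLEEmb_univ {ℓ d : ℕ} (h : ℓ ≤ d) :
    (univ.map (Fin.castLEEmb h))ᶜ = univ.filter fun i : Fin d => ℓ ≤ (i : ℕ) := by
  ext i
  simp only [mem_compl, mem_map, mem_univ, true_and, mem_filter, Fin.castLEEmb_apply, not_exists]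
  refine ⟨fun hi => not_lt.mp fun hlt => hi ⟨i, hlt⟩ rfl, fun hi a ha => ?_⟩
  subst ha
  exact (Fin.val_castLE h a ▸ hi).not_gt a.2

theorem pod_approximation_error_formula_general
    {V : Type*} [NormedAddCommGroup V] [InnerProductSpace ℝ V]
    (n : ℕ) (y : Fin (n + 1) → V) (β : Fin (n + 1) → ℝ)
    (R : V → V) (hR : ∀ ψ : V, R ψ = ∑ j, (β j * ⟪y j, ψ⟫) • y j)
    (d : ℕ)
    (lam : Fin d → ℝ) (ψ : Fin d → V)
    (hon : Orthonormal ℝ ψ)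
    (heig : ∀ i : Fin d, R (ψ i) = lam i • ψ i)
    (hspan : Submodule.span ℝ (Set.range ψ) = Submodule.span ℝ (Set.range y))
    (ℓ : ℕ) (hℓd : ℓ ≤ d) :
    ∑ j, β j * ‖y j - ∑ i : Fin ℓ, ⟪y j, ψ (Fin.castLE hℓd i)⟫ • ψ (Fin.castLE hℓd i)‖ ^ 2 =
      ∑ i ∈ Finset.univ.filter (fun i : Fin d => ℓ ≤ (i : ℕ)), lam i := by
  have hy : ∀ j, y j ∈ Submodule.span ℝ (Set.range ψ) := fun j =>
    hspan ▸ Submodule.subset_span ⟨j, rfl⟩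
  calc _ = ∑ j, β j * ∑ i ∈ univ.filter (fun i : Fin d => ℓ ≤ (i : ℕ)), ⟪y j, ψ i⟫ ^ 2 := by
        refine sum_congr rfl fun j _ => ?_
        rw [← Fin.compl_map_castLEEmb_univ hℓd, ← hon.norm_sub_sum_inner_smul_sq_s9 (hy j),
          sum_map]
        rfl
    _ = ∑ i ∈ univ.filter (fun i : Fin d => ℓ ≤ (i : ℕ)), ∑ j, β j * ⟪y j, ψ i⟫ ^ 2 := by
        simp_rw [mul_sum]
        exact sum_comm
    _ = _ := sum_congr rfl fun i _ =>
        (eigenvalue_eq_sum_mul_inner_sq_of_norm_eq_one y β hR (hon.norm_eq_one i) (heig i)).symm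

/-- POD approximation error formula: the projection error onto the span of the
leading `ℓ` eigenvectors equals the sum of the neglected eigenvalues
`∑_{i=ℓ+1}^d λ_i`. -/
theorem pod_approximation_error_formula
    {V : Type*} [NormedAddCommGroup V] [InnerProductSpace ℝ V] [CompleteSpace V]
    (n : ℕ) (y : Fin (n + 1) → V) (β : Fin (n + 1) → ℝ) (hβ : ∀ j, 0 < β j)
    (R : V → V) (hR : ∀ ψ : V, R ψ = ∑ j, (β j * ⟪y j, ψ⟫) • y j)
    (d : ℕ) (hd : d = Module.finrank ℝ (Submodule.span ℝ (Set.range y)))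
    (lam : Fin d → ℝ) (ψ : Fin d → V)
    (hord : ∀ i j : Fin d, i ≤ j → lam j ≤ lam i)
    (hpos : ∀ i : Fin d, 0 < lam i)
    (hon : Orthonormal ℝ ψ)
    (heig : ∀ i : Fin d, R (ψ i) = lam i • ψ i)
    (hspan : Submodule.span ℝ (Set.range ψ) = Submodule.span ℝ (Set.range y))
    (ℓ : ℕ) (hℓ1 : 1 ≤ ℓ) (hℓd : ℓ ≤ d) :
    ∑ j, β j * ‖y j - ∑ i : Fin ℓ, ⟪y j, ψ (Fin.castLE hℓd i)⟫ • ψ (Fin.castLE hℓd i)‖ ^ 2 =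
      ∑ i ∈ Finset.univ.filter (fun i : Fin d => ℓ ≤ (i : ℕ)), lam i :=
  pod_approximation_error_formula_general n y β R hR d lam ψ hon heig hspan ℓ hℓd
end

section
/- Let V be a real Hilbert space, let y_0, …, y_n ∈ V be given snapshots and β_0, …, β_n > 0 given positive weights, and let R : V → V be defined by Rψ = Σ_{j=0}^n β_j ⟨y_j, ψ⟩ y_j. Let K ∈ ℝ^{(n+1)×(n+1)} be the weighted Gram matrix with entries K_{jk} = √(β_j) √(β_k) ⟨y_j, y_k⟩. Then λ > 0 is an eigenvalue of R if and only if λ is an eigenvalue of the symmetric matrix K; i.e. the positive eigenvalues of the correlation operator R coincide with the positive eigenvalues of the weighted snapshot Gram matrix. -/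
/-!
With `z j = √β_j • y j` and the synthesis map `A v = ∑ v_j • z j`, the correlation operator is
`R = A ∘ A*` while `K = A* ∘ A` is the Gram matrix of `z`. For any linear maps `A`, `B`, the
compositions `A ∘ B` and `B ∘ A` have the same nonzero eigenvalues: if `A (B x) = μ • x` with
`x ≠ 0` and `μ ≠ 0`, then `B x ≠ 0` and `B (A (B x)) = μ • B x`.
-/

open RealInnerProductSpace

namespace LinearMap

variable {K E F : Type*} [DivisionRing K] [AddCommGroup E] [Module K E]
  [AddCommGroup F] [Module K F]

theorem exists_eigenvector_comp_of_exists_eigenvector_comp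
    (A : E →ₗ[K] F) (B : F →ₗ[K] E) {μ : K} (hμ : μ ≠ 0)
    (h : ∃ x, x ≠ 0 ∧ A (B x) = μ • x) : ∃ v, v ≠ 0 ∧ B (A v) = μ • v := by
  obtain ⟨x, hx, hABx⟩ := h
  refine ⟨B x, fun hBx => ?_, by rw [hABx, map_smul]⟩
  rw [hBx, map_zero, eq_comm, smul_eq_zero] at hABx
  exact hABx.elim hμ hx

theorem exists_eigenvector_comp_comm_iff
    (A : E →ₗ[K] F) (B : F →ₗ[K] E) {μ : K} (hμ : μ ≠ 0) :
    (∃ x, x ≠ 0 ∧ A (B x) = μ • x) ↔ ∃ v, v ≠ 0 ∧ B (A v) = μ • v :=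
  ⟨exists_eigenvector_comp_of_exists_eigenvector_comp A B hμ,
    exists_eigenvector_comp_of_exists_eigenvector_comp B A hμ⟩

end LinearMap

section Gram

open scoped InnerProductSpace

variable {𝕜 E ι : Type*} [RCLike 𝕜] [NormedAddCommGroup E] [InnerProductSpace 𝕜 E] [Fintype ι]

theorem Matrix.gram_mulVec_eq_inner_linearCombination (z : ι → E) (v : ι → 𝕜) :
    (Matrix.gram 𝕜 z).mulVec v = fun j => ⟪z j, Fintype.linearCombination 𝕜 z v⟫_𝕜 := by
  ext j
  simp [Matrix.mulVec, dotProduct, Fintype.linearCombination_apply, inner_sum, inner_smul_right,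
    mul_comm]

theorem exists_eigenvector_sum_inner_smul_iff_gram (z : ι → E) {μ : 𝕜} (hμ : μ ≠ 0) :
    (∃ ψ : E, ψ ≠ 0 ∧ ∑ j, ⟪z j, ψ⟫_𝕜 • z j = μ • ψ) ↔
      ∃ v : ι → 𝕜, v ≠ 0 ∧ (Matrix.gram 𝕜 z).mulVec v = μ • v := by
  rw [funext (Matrix.gram_mulVec_eq_inner_linearCombination z)]
  exact LinearMap.exists_eigenvector_comp_comm_iff (Fintype.linearCombination 𝕜 z)
      (LinearMap.pi fun j => innerₛₗ 𝕜 (z j)) hμ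

end Gram

theorem pod_eigenvalues_eq_gram_eigenvalues_general
    {V : Type*} [NormedAddCommGroup V] [InnerProductSpace ℝ V]
    (n : ℕ) (y : Fin (n + 1) → V) (β : Fin (n + 1) → ℝ) (hβ : ∀ j, 0 < β j)
    (R : V → V) (hR : ∀ ψ : V, R ψ = ∑ j, (β j * ⟪y j, ψ⟫) • y j)
    (K : Matrix (Fin (n + 1)) (Fin (n + 1)) ℝ)
    (hK : ∀ j k, K j k = Real.sqrt (β j) * Real.sqrt (β k) * ⟪y j, y k⟫)
    (lam : ℝ) (hlam : 0 < lam) :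
    (∃ ψ : V, ψ ≠ 0 ∧ R ψ = lam • ψ) ↔
      (∃ v : Fin (n + 1) → ℝ, v ≠ 0 ∧ K.mulVec v = lam • v) := by
  set z : Fin (n + 1) → V := fun j => Real.sqrt (β j) • y j
  have hRz : R = fun ψ => ∑ j, ⟪z j, ψ⟫ • z j := by
    funext ψ
    rw [hR]
    refine Finset.sum_congr rfl fun j _ => ?_
    rw [real_inner_smul_left, smul_smul, mul_right_comm, Real.mul_self_sqrt (hβ j).le]
  have hKz : K = Matrix.gram ℝ z := by
    ext j k
    rw [hK, Matrix.gram_apply, real_inner_smul_left, real_inner_smul_right, mul_assoc]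
  rw [hRz, hKz]
  exact exists_eigenvector_sum_inner_smul_iff_gram z hlam.ne'

/-- Method of snapshots: a positive real `λ` is an eigenvalue of the POD correlation
operator `R ψ = ∑ β_j ⟪y_j, ψ⟫ y_j` if and only if it is an eigenvalue of the
weighted snapshot Gram matrix `K` with `K_{jk} = √β_j √β_k ⟪y_j, y_k⟫`. -/
theorem pod_eigenvalues_eq_gram_eigenvalues
    {V : Type*} [NormedAddCommGroup V] [InnerProductSpace ℝ V] [CompleteSpace V]
    (n : ℕ) (y : Fin (n + 1) → V) (β : Fin (n + 1) → ℝ) (hβ : ∀ j, 0 < β j)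
    (R : V → V) (hR : ∀ ψ : V, R ψ = ∑ j, (β j * ⟪y j, ψ⟫) • y j)
    (K : Matrix (Fin (n + 1)) (Fin (n + 1)) ℝ)
    (hK : ∀ j k, K j k = Real.sqrt (β j) * Real.sqrt (β k) * ⟪y j, y k⟫)
    (lam : ℝ) (hlam : 0 < lam) :
    (∃ ψ : V, ψ ≠ 0 ∧ R ψ = lam • ψ) ↔
      (∃ v : Fin (n + 1) → ℝ, v ≠ 0 ∧ K.mulVec v = lam • v) :=
  pod_eigenvalues_eq_gram_eigenvalues_general n y β hβ R hR K hK lam hlam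
end
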